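/- Let ρ be a nondegenerate (not a point mass) compactly supported probability measure on ℝ. Then for every t ∈ D̂_ρ with t ≠ 0, the real R-transform R̂_ρ is differentiable at t and R̂_ρ′(t) > 0. -/

import Mathlib

open MeasureTheory Filter Set

noncomputable section

/-- The topological support of a Borel measure on `ℝ`. -/
def msupp (μ : Measure ℝ) : Set ℝ := {x : ℝ | ∀ U ∈ nhds x, μ U ≠ 0}

/-- Compact support: some compact set has full measure. -/
def HasCompactSupp (μ : Measure ℝ) : Prop := ∃ K : Set ℝ, IsCompact K ∧ μ K = 1

/-- `a_μ`, the infimum of the support. -/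
def aInf (μ : Measure ℝ) : ℝ := sInf (msupp μ)

/-- `b_μ`, the supremum of the support. -/
def bSup (μ : Measure ℝ) : ℝ := sSup (msupp μ)

/-- The (real) Stieltjes transform `G_μ(z) = ∫ (λ - z)⁻¹ dμ(λ)`. -/
def Gst (μ : Measure ℝ) (z : ℝ) : ℝ := ∫ l, (l - z)⁻¹ ∂μ

/-- `G_μ(a_μ) = lim_{z ↑ a_μ} G_μ(z) ∈ (0,∞]`, as the supremum (in `EReal`) of the values of
`G_μ` on `(-∞, a_μ)` (the two agree since `G_μ` is increasing there). -/
def GaSup (μ : Measure ℝ) : EReal :=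
  sSup ((fun z => ((Gst μ z : ℝ) : EReal)) '' Set.Iio (aInf μ))

/-- `G_μ(b_μ) = lim_{z ↓ b_μ} G_μ(z) ∈ [-∞,0)`, as the infimum (in `EReal`) of the values of
`G_μ` on `(b_μ, ∞)` (the two agree since `G_μ` is increasing there). -/
def GbInf (μ : Measure ℝ) : EReal :=
  sInf ((fun z => ((Gst μ z : ℝ) : EReal)) '' Set.Ioi (bSup μ))

/-- The interval `D̂_μ = (-G_μ(a_μ), -G_μ(b_μ)) ⊆ ℝ`. -/
def Dhat (μ : Measure ℝ) : Set ℝ :=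
  {u : ℝ | -(GaSup μ) < (u : EReal) ∧ (u : EReal) < -(GbInf μ)}

/-- The inverse `G_μ^⟨-1⟩` of the restriction of `G_μ` to `ℝ ∖ [a_μ, b_μ]`. -/
def Ginv (μ : Measure ℝ) (g : ℝ) : ℝ :=
  Function.invFunOn (Gst μ) (Set.Iio (aInf μ) ∪ Set.Ioi (bSup μ)) g

/-- The real `R`-transform `R̂_μ(u) = G_μ^⟨-1⟩(-u) - u⁻¹`, meaningful for `u ∈ D̂_μ ∖ {0}`. -/
def Rhat (μ : Measure ℝ) (u : ℝ) : ℝ := Ginv μ (-u) - u⁻¹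

/-- `ρ` is a free additive convolution of `μ` and `ν`. -/
def IsFreeAdd (μ ν ρ : Measure ℝ) : Prop :=
  IsProbabilityMeasure ρ ∧ HasCompactSupp ρ ∧
  ∃ ε > (0 : ℝ), ∀ u : ℝ, u ∈ Set.Ioo (-ε) ε → u ≠ 0 →
    u ∈ Dhat ρ ∧ u ∈ Dhat μ ∧ u ∈ Dhat ν ∧ Rhat ρ u = Rhat μ u + Rhat ν u

/-- `μ` is nondegenerate: not a point mass. -/
def Nondeg (μ : Measure ℝ) : Prop := ¬ ∃ c : ℝ, μ = Measure.dirac c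

/-- The logarithmic potential `U_ρ(z) = ∫ log |z - λ| dρ(λ)`. -/
def Upot (ρ : Measure ℝ) (z : ℝ) : ℝ := ∫ l, Real.log |z - l| ∂ρ

/-- `E_{μ,ν,z}(g) = ∫₀^g s R̂_μ'(-s) ds + ∫ log (λ - z + R̂_μ(-g)) dν(λ)`. -/
def Efun (μ ν : Measure ℝ) (z : ℝ) (g : ℝ) : ℝ :=
  (∫ s in (0:ℝ)..g, s * deriv (Rhat μ) (-s)) + ∫ l, Real.log (l - z + Rhat μ (-g)) ∂ν

/-- The domain `Ê_{μ,ν,z}` of `E_{μ,ν,z}`. -/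
def Ehat (μ ν : Measure ℝ) (z : ℝ) : Set ℝ :=
  {g : ℝ | -g ∈ Dhat μ ∧ g ≠ 0 ∧ z - Rhat μ (-g) < aInf ν}

/-- `F̂_{μ,ν}(h) = R̂_μ(-G_ν(h)) + h`. -/
def Fhat (μ ν : Measure ℝ) (h : ℝ) : ℝ := Rhat μ (-(Gst ν h)) + h

/-- The domain of `F̂_{μ,ν}`. -/
def FhatDom (μ ν : Measure ℝ) : Set ℝ := {h : ℝ | h < aInf ν ∧ -(Gst ν h) ∈ Dhat μ}

/-- `Ĥ_{μ,ν}`: points of the domain to the left of which `F̂_{μ,ν}'` is positive. -/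
def Hhat (μ ν : Measure ℝ) : Set ℝ :=
  {h : ℝ | h ∈ FhatDom μ ν ∧ ∀ t ∈ FhatDom μ ν, t < h → 0 < deriv (Fhat μ ν) t}

/-- `h*_{μ,ν} = sup Ĥ_{μ,ν}`. -/
def hstar (μ ν : Measure ℝ) : ℝ := sSup (Hhat μ ν)

end

/-!
Off the support, `G_ρ` is differentiable with `G_ρ'(z) = ∫ (λ - z)⁻² dρ(λ)`, which exceeds
`G_ρ(z)²` by the variance of `λ ↦ (λ - z)⁻¹`; this variance is positive because `ρ` is not a point
mass. Hence `G_ρ` is strictly increasing on both sides of the support, positive on the left and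
negative on the right, so it is injective there, and since it tends to `0` at `±∞` the
intermediate value theorem produces `z` with `G_ρ(z) = -t`. The inverse function theorem then
gives `R̂_ρ'(t) = t⁻² - G_ρ'(z)⁻¹ > 0`, because `G_ρ'(z) > G_ρ(z)² = t²`.
-/

open MeasureTheory Filter Set Metric ProbabilityTheory Function
open scoped Topology

lemma msupp_eq_support (μ : Measure ℝ) : msupp μ = μ.support := by
  ext x
  simp [msupp, Measure.mem_support_iff_forall, pos_iff_ne_zero]

lemma ae_mem_Icc_aInf_bSup {μ : Measure ℝ} [IsProbabilityMeasure μ] (hc : HasCompactSupp μ) :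
    ∀ᵐ l ∂μ, l ∈ Icc (aInf μ) (bSup μ) := by
  obtain ⟨K, hK, hK1⟩ := hc
  have hKae : K ∈ ae μ := mem_ae_iff.2 ((prob_compl_eq_zero_iff hK.isClosed.measurableSet).2 hK1)
  have hsub : msupp μ ⊆ K :=
    msupp_eq_support μ ▸ Measure.support_subset_of_isClosed hK.isClosed hKae
  filter_upwards [msupp_eq_support μ ▸ Measure.support_mem_ae (μ := μ)] with l hl
  exact ⟨csInf_le (hK.bddBelow.mono hsub) hl, le_csSup (hK.bddAbove.mono hsub) hl⟩

lemma eq_dirac_of_ae_eq {α : Type*} [MeasurableSpace α] {μ : Measure α} [IsProbabilityMeasure μ]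
    {c : α} (h : ∀ᵐ x ∂μ, x = c) : μ = Measure.dirac c := by
  simpa using (hasLaw_dirac_of_ae_eq (X := id) h).map_eq

lemma sq_integral_lt_integral_sq {Ω : Type*} [MeasurableSpace Ω] {μ : Measure Ω}
    [IsProbabilityMeasure μ] {f : Ω → ℝ} (hf : MemLp f 2 μ) (hnc : ∀ c, ¬ f =ᵐ[μ] fun _ => c) :
    (∫ x, f x ∂μ) ^ 2 < ∫ x, f x ^ 2 ∂μ := by
  have hvar : 0 < Var[f; μ] :=
    (variance_nonneg f μ).lt_of_ne' fun h => hnc _ (ae_eq_integral_of_variance_eq_zero hf h)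
  rw [variance_eq_sub hf] at hvar
  simpa [sub_pos] using hvar

lemma exists_pos_forall_le_dist_of_notMem {X : Type*} [PseudoMetricSpace X] {K : Set X} {z : X}
    (hK : IsClosed K) (hz : z ∉ K) : ∃ ε > 0, ∀ l ∈ K, ∀ w ∈ ball z ε, ε ≤ dist l w := by
  obtain ⟨δ, hδ, hball⟩ := Metric.isOpen_iff.1 hK.isOpen_compl z hz
  refine ⟨δ / 2, half_pos hδ, fun l hl w hw => ?_⟩
  have hlz : δ ≤ dist l z := not_lt.1 fun h => hball (mem_ball.2 h) hl
  have := dist_triangle l w z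
  rw [mem_ball] at hw
  linarith

lemma disjoint_Iio_union_Ioi_Icc {α : Type*} [LinearOrder α] (a b : α) :
    Disjoint (Iio a ∪ Ioi b) (Icc a b) :=
  disjoint_left.2 fun _ hx h => hx.elim (fun h' => not_le.2 h' h.1) (fun h' => not_le.2 h' h.2)

theorem hasDerivAt_invFunOn_of_strictMonoOn {f : ℝ → ℝ} {S U : Set ℝ} {z f' : ℝ}
    (hinj : InjOn f S) (hUS : U ⊆ S) (hU : U ∈ 𝓝 z) (hmono : StrictMonoOn f U)
    (hcont : ContinuousOn f U) (hf : HasDerivAt f f' z) (hf' : f' ≠ 0) :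
    HasDerivAt (invFunOn f S) f'⁻¹ (f z) := by
  set g := invFunOn f S
  obtain ⟨ε, hε, hεU⟩ := nhds_basis_closedBall.mem_iff.1 hU
  rw [Real.closedBall_eq_Icc] at hεU
  set I := Icc (z - ε) (z + ε)
  have hmonoI := hmono.mono hεU
  have hzI : z ∈ I := ⟨by linarith, by linarith⟩
  have hgf : ∀ x ∈ I, g (f x) = x := fun x hx => hinj.leftInvOn_invFunOn (hUS (hεU hx))
  set N := Ioo (f (z - ε)) (f (z + ε))
  have hmemN : ∀ x ∈ Ioo (z - ε) (z + ε), f x ∈ N := fun x hx =>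
    ⟨hmonoI ⟨le_rfl, by linarith⟩ (Ioo_subset_Icc_self hx) hx.1,
      hmonoI (Ioo_subset_Icc_self hx) ⟨by linarith, le_rfl⟩ hx.2⟩
  have hN : N ∈ 𝓝 (f z) := Ioo_mem_nhds (hmemN z ⟨by linarith, by linarith⟩).1
    (hmemN z ⟨by linarith, by linarith⟩).2
  have hfg : ∀ y ∈ N, g y ∈ I ∧ f (g y) = y := by
    intro y hy
    obtain ⟨x, hx, rfl⟩ :=
      intermediate_value_Icc (by linarith) (hcont.mono hεU) (Ioo_subset_Icc_self hy)
    rw [hgf x hx]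
    exact ⟨hx, rfl⟩
  have hgmono : StrictMonoOn g N := fun y₁ hy₁ y₂ hy₂ h => by
    obtain ⟨h₁, e₁⟩ := hfg y₁ hy₁
    obtain ⟨h₂, e₂⟩ := hfg y₂ hy₂
    exact (hmonoI.lt_iff_lt h₁ h₂).1 (by rwa [e₁, e₂])
  have himg : g '' N ∈ 𝓝 (g (f z)) := by
    rw [hgf z hzI]
    refine mem_of_superset (Ioo_mem_nhds (by linarith : z - ε < z) (by linarith : z < z + ε))
      fun x hx => ⟨f x, hmemN x hx, hgf x (Ioo_subset_Icc_self hx)⟩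
  exact HasDerivAt.of_local_left_inverse (hgmono.continuousAt_of_image_mem_nhds hN himg)
    ((hgf z hzI).symm ▸ hf) hf' (eventually_of_mem hN fun y hy => (hfg y hy).2)

section Stieltjes

variable {ρ : Measure ℝ} {K : Set ℝ} {z : ℝ}

lemma memLp_inv_sub [IsFiniteMeasure ρ] (hK : IsClosed K) (hae : ∀ᵐ l ∂ρ, l ∈ K) (hz : z ∉ K)
    (p : ENNReal) : MemLp (fun l => (l - z)⁻¹) p ρ := by
  obtain ⟨ε, hε, hsep⟩ := exists_pos_forall_le_dist_of_notMem hK hz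
  refine MemLp.of_bound (by fun_prop) ε⁻¹ ?_
  filter_upwards [hae] with l hl
  rw [norm_inv, ← dist_eq_norm]
  exact inv_anti₀ hε (hsep l hl z (mem_ball_self hε))

lemma hasDerivAt_Gst [IsFiniteMeasure ρ] (hK : IsClosed K) (hae : ∀ᵐ l ∂ρ, l ∈ K) (hz : z ∉ K) :
    HasDerivAt (Gst ρ) (∫ l, (l - z)⁻¹ ^ 2 ∂ρ) z := by
  obtain ⟨ε, hε, hsep⟩ := exists_pos_forall_le_dist_of_notMem hK hz
  refine (hasDerivAt_integral_of_dominated_loc_of_deriv_le (F := fun w l => (l - w)⁻¹)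
    (F' := fun w l => (l - w)⁻¹ ^ 2) (ball_mem_nhds z hε) (.of_forall fun _ => by fun_prop)
    ((memLp_inv_sub hK hae hz 1).integrable le_rfl) (by fun_prop) ?_
    (integrable_const (ε⁻¹ ^ 2)) ?_).2
  · filter_upwards [hae] with l hl w hw
    rw [norm_pow, norm_inv, ← dist_eq_norm]
    exact pow_le_pow_left₀ (by positivity) (inv_anti₀ hε (hsep l hl w hw)) 2
  · filter_upwards [hae] with l hl w hw
    have hne : l - w ≠ 0 := by
      rw [sub_ne_zero, ← dist_pos]
      exact hε.trans_le (hsep l hl w hw)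
    simpa [inv_pow] using ((hasDerivAt_id' w).const_sub l).fun_inv hne

lemma continuousOn_Gst [IsFiniteMeasure ρ] (hK : IsClosed K) (hae : ∀ᵐ l ∂ρ, l ∈ K)
    {U : Set ℝ} (hUK : Disjoint U K) : ContinuousOn (Gst ρ) U := fun _ hw =>
  (hasDerivAt_Gst hK hae (disjoint_left.1 hUK hw)).continuousAt.continuousWithinAt

lemma sq_Gst_lt_integral [IsProbabilityMeasure ρ] (hnd : Nondeg ρ) (hK : IsClosed K)
    (hae : ∀ᵐ l ∂ρ, l ∈ K) (hz : z ∉ K) : Gst ρ z ^ 2 < ∫ l, (l - z)⁻¹ ^ 2 ∂ρ := by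
  refine sq_integral_lt_integral_sq (memLp_inv_sub hK hae hz 2) fun c hc => hnd ⟨z + c⁻¹, ?_⟩
  refine eq_dirac_of_ae_eq (hc.mono fun l hl => ?_)
  -- valid also for `c = 0`, since `0⁻¹ = 0`
  rw [← show (l - z)⁻¹ = c from hl, inv_inv]
  ring

lemma strictMonoOn_Gst [IsProbabilityMeasure ρ] (hnd : Nondeg ρ) (hK : IsClosed K)
    (hae : ∀ᵐ l ∂ρ, l ∈ K) {D : Set ℝ} (hD : Convex ℝ D) (hDK : Disjoint D K) :
    StrictMonoOn (Gst ρ) D := by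
  refine strictMonoOn_of_deriv_pos hD (continuousOn_Gst hK hae hDK) fun w hw => ?_
  have hwK := disjoint_left.1 hDK (interior_subset hw)
  rw [(hasDerivAt_Gst hK hae hwK).deriv]
  exact (sq_nonneg _).trans_lt (sq_Gst_lt_integral hnd hK hae hwK)

lemma Gst_pos_of_lt [IsProbabilityMeasure ρ] {a b : ℝ} (hae : ∀ᵐ l ∂ρ, l ∈ Icc a b)
    (hz : z < a) : 0 < Gst ρ z := by
  obtain ⟨l₀, hl₀⟩ := hae.exists
  have hint := memLp_inv_sub isClosed_Icc hae (fun h => absurd h.1 (not_le.2 hz)) 1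
  calc 0 < (b - z)⁻¹ := inv_pos.2 (by linarith [hl₀.1, hl₀.2])
    _ = ∫ _, (b - z)⁻¹ ∂ρ := by simp
    _ ≤ Gst ρ z :=
        integral_mono_ae (integrable_const _) (hint.integrable le_rfl) <| by
          filter_upwards [hae] with l hl
          exact inv_anti₀ (by linarith [hl.1]) (by linarith [hl.2])

lemma Gst_neg_of_gt [IsProbabilityMeasure ρ] {a b : ℝ} (hae : ∀ᵐ l ∂ρ, l ∈ Icc a b)
    (hz : b < z) : Gst ρ z < 0 := by
  obtain ⟨l₀, hl₀⟩ := hae.exists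
  have hint := memLp_inv_sub isClosed_Icc hae (fun h => absurd h.2 (not_le.2 hz)) 1
  calc Gst ρ z ≤ ∫ _, (a - z)⁻¹ ∂ρ :=
        integral_mono_ae (hint.integrable le_rfl) (integrable_const _) <| by
          filter_upwards [hae] with l hl
          exact (inv_le_inv_of_neg (by linarith [hl.2]) (by linarith [hl₀.1, hl₀.2])).2
            (by linarith [hl.1])
    _ = (a - z)⁻¹ := by simp
    _ < 0 := inv_lt_zero.2 (by linarith [hl₀.1, hl₀.2])

lemma tendsto_Gst_atTop [IsProbabilityMeasure ρ] {b : ℝ} (hae : ∀ᵐ l ∂ρ, l ≤ b) :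
    Tendsto (Gst ρ) atTop (𝓝 0) := by
  refine squeeze_zero_norm' (a := fun z => (z - b)⁻¹) ?_
    (tendsto_inv_atTop_zero.comp (tendsto_atTop_add_const_right _ (-b) tendsto_id))
  filter_upwards [eventually_gt_atTop b] with z hz
  refine (norm_integral_le_of_norm_le_const (C := (z - b)⁻¹) ?_).trans_eq (by simp)
  filter_upwards [hae] with l hl
  rw [norm_inv, Real.norm_eq_abs, abs_sub_comm, abs_of_pos (by linarith)]
  exact inv_anti₀ (by linarith) (by linarith)

lemma tendsto_Gst_atBot [IsProbabilityMeasure ρ] {a : ℝ} (hae : ∀ᵐ l ∂ρ, a ≤ l) :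
    Tendsto (Gst ρ) atBot (𝓝 0) := by
  refine squeeze_zero_norm' (a := fun z => (a - z)⁻¹) ?_
    (tendsto_inv_atTop_zero.comp (tendsto_atTop_add_const_left _ a tendsto_neg_atBot_atTop))
  filter_upwards [eventually_lt_atBot a] with z hz
  refine (norm_integral_le_of_norm_le_const (C := (a - z)⁻¹) ?_).trans_eq (by simp)
  filter_upwards [hae] with l hl
  rw [norm_inv, Real.norm_eq_abs, abs_of_pos (by linarith)]
  exact inv_anti₀ (by linarith) (by linarith)

lemma injOn_Gst [IsProbabilityMeasure ρ] (hnd : Nondeg ρ) {a b : ℝ}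
    (hae : ∀ᵐ l ∂ρ, l ∈ Icc a b) : InjOn (Gst ρ) (Iio a ∪ Ioi b) := by
  have hleft := strictMonoOn_Gst hnd isClosed_Icc hae (convex_Iio a)
    ((disjoint_Iio_union_Ioi_Icc _ _).mono_left subset_union_left)
  have hright := strictMonoOn_Gst hnd isClosed_Icc hae (convex_Ioi b)
    ((disjoint_Iio_union_Ioi_Icc _ _).mono_left subset_union_right)
  rintro x (hx | hx) y (hy | hy) hxy
  · exact hleft.injOn hx hy hxy
  · exact absurd hxy ((Gst_neg_of_gt hae hy).trans (Gst_pos_of_lt hae hx)).ne'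
  · exact absurd hxy ((Gst_neg_of_gt hae hx).trans (Gst_pos_of_lt hae hy)).ne
  · exact hright.injOn hx hy hxy

end Stieltjes

section Attained

variable {ρ : Measure ℝ} [IsProbabilityMeasure ρ]

lemma exists_lt_aInf_Gst_eq (hae : ∀ᵐ l ∂ρ, l ∈ Icc (aInf ρ) (bSup ρ)) {s : ℝ} (hs : 0 < s)
    (hsG : (s : EReal) < GaSup ρ) : ∃ z < aInf ρ, Gst ρ z = s := by
  obtain ⟨_, ⟨w, hw, rfl⟩, hsw⟩ := lt_sSup_iff.1 hsG
  obtain ⟨v, hvs, hv⟩ := (((tendsto_Gst_atBot (hae.mono fun l hl => hl.1)).eventually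
    (gt_mem_nhds hs)).and (eventually_lt_atBot (aInf ρ))).exists
  have hcont := continuousOn_Gst isClosed_Icc hae
    ((disjoint_Iio_union_Ioi_Icc _ _).mono_left subset_union_left)
  obtain ⟨z, hz, hGz⟩ := isPreconnected_Iio.intermediate_value hv hw hcont
    ⟨hvs.le, (EReal.coe_lt_coe_iff.1 hsw).le⟩
  exact ⟨z, hz, hGz⟩

lemma exists_gt_bSup_Gst_eq (hae : ∀ᵐ l ∂ρ, l ∈ Icc (aInf ρ) (bSup ρ)) {s : ℝ} (hs : s < 0)
    (hsG : GbInf ρ < s) : ∃ z > bSup ρ, Gst ρ z = s := by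
  obtain ⟨_, ⟨w, hw, rfl⟩, hws⟩ := sInf_lt_iff.1 hsG
  obtain ⟨v, hvs, hv⟩ := (((tendsto_Gst_atTop (hae.mono fun l hl => hl.2)).eventually
    (lt_mem_nhds hs)).and (eventually_gt_atTop (bSup ρ))).exists
  have hcont := continuousOn_Gst isClosed_Icc hae
    ((disjoint_Iio_union_Ioi_Icc _ _).mono_left subset_union_right)
  obtain ⟨z, hz, hGz⟩ := isPreconnected_Ioi.intermediate_value hw hv hcont
    ⟨(EReal.coe_lt_coe_iff.1 hws).le, hvs.le⟩
  exact ⟨z, hz, hGz⟩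

lemma exists_Gst_eq_neg_of_mem_Dhat (hae : ∀ᵐ l ∂ρ, l ∈ Icc (aInf ρ) (bSup ρ)) {t : ℝ}
    (ht : t ∈ Dhat ρ) (ht0 : t ≠ 0) : ∃ z ∈ Iio (aInf ρ) ∪ Ioi (bSup ρ), Gst ρ z = -t := by
  rcases ht0.lt_or_gt with htneg | htpos
  · obtain ⟨z, hz, hGz⟩ := exists_lt_aInf_Gst_eq hae (neg_pos.2 htneg)
      (by simpa using EReal.neg_lt_comm.1 ht.1)
    exact ⟨z, Or.inl hz, hGz⟩
  · obtain ⟨z, hz, hGz⟩ := exists_gt_bSup_Gst_eq hae (neg_neg_of_pos htpos)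
      (by simpa using EReal.lt_neg_comm.1 ht.2)
    exact ⟨z, Or.inr hz, hGz⟩

end Attained

lemma hasDerivAt_Ginv {ρ : Measure ℝ} [IsProbabilityMeasure ρ] (hnd : Nondeg ρ)
    (hae : ∀ᵐ l ∂ρ, l ∈ Icc (aInf ρ) (bSup ρ)) {z : ℝ} (hz : z ∈ Iio (aInf ρ) ∪ Ioi (bSup ρ)) :
    HasDerivAt (Ginv ρ) (∫ l, (l - z)⁻¹ ^ 2 ∂ρ)⁻¹ (Gst ρ z) := by
  obtain ⟨U, hUS, hUo, hzU, hUconv⟩ : ∃ U ⊆ Iio (aInf ρ) ∪ Ioi (bSup ρ),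
      IsOpen U ∧ z ∈ U ∧ Convex ℝ U := by
    rcases hz with hz | hz
    · exact ⟨_, subset_union_left, isOpen_Iio, hz, convex_Iio _⟩
    · exact ⟨_, subset_union_right, isOpen_Ioi, hz, convex_Ioi _⟩
  have hUK := (disjoint_Iio_union_Ioi_Icc _ _).mono_left hUS
  have hzK := disjoint_left.1 hUK hzU
  exact hasDerivAt_invFunOn_of_strictMonoOn (injOn_Gst hnd hae) hUS (hUo.mem_nhds hzU)
    (strictMonoOn_Gst hnd isClosed_Icc hae hUconv hUK) (continuousOn_Gst isClosed_Icc hae hUK)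
    (hasDerivAt_Gst isClosed_Icc hae hzK)
    ((sq_nonneg _).trans_lt (sq_Gst_lt_integral hnd isClosed_Icc hae hzK)).ne'

/-- for a nondegenerate compactly supported `ρ`, the real `R`-transform is
differentiable with positive derivative on `D̂_ρ ∖ {0}`. -/
theorem statement11 (ρ : MeasureTheory.Measure ℝ) [MeasureTheory.IsProbabilityMeasure ρ]
    (hc : HasCompactSupp ρ) (hnd : Nondeg ρ) :
    ∀ t ∈ Dhat ρ, t ≠ 0 → DifferentiableAt ℝ (Rhat ρ) t ∧ 0 < deriv (Rhat ρ) t := by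
  intro t ht ht0
  have hae := ae_mem_Icc_aInf_bSup hc
  obtain ⟨z, hz, hGz⟩ := exists_Gst_eq_neg_of_mem_Dhat hae ht ht0
  set G' := ∫ l, (l - z)⁻¹ ^ 2 ∂ρ
  have htG' : t ^ 2 < G' := by
    have := sq_Gst_lt_integral hnd isClosed_Icc hae
      (disjoint_left.1 (disjoint_Iio_union_Ioi_Icc _ _) hz)
    rwa [hGz, neg_sq] at this
  have hGinv : HasDerivAt (Ginv ρ) G'⁻¹ (-t) := hGz ▸ hasDerivAt_Ginv hnd hae hz
  have hR : HasDerivAt (Rhat ρ) (-G'⁻¹ + (t ^ 2)⁻¹) t :=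
    ((hGinv.comp t (hasDerivAt_neg t)).fun_sub (hasDerivAt_inv ht0)).congr_deriv (by ring)
  refine ⟨hR.differentiableAt, ?_⟩
  rw [hR.deriv]
  linarith [inv_strictAnti₀ (by positivity) htG']
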